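/- Under the Yule model, the expected number of cherries in a random ranked tree of size n ≥ 2 is (n+1)/3 and the variance is 2(n+1)/45 for n ≥ 5; i.e., Σ_{t ∈ R_n} l(t)·2^{n−l(t)}/n! = (n+1)/3 and Σ_{t ∈ R_n} l(t)²·2^{n−l(t)}/n! − ((n+1)/3)² = 2(n+1)/45. -/

import Mathlib

/-!
Common definitions: plane (ordered) labeled binary trees, the flip relation
generating the "unordered" identification, ranked trees, Ω-trees, and counts.
-/

/-- Plane rooted binary trees whose internal nodes carry a label. -/
inductive PTree : Type where
  | leaf : PTree
  | node : ℕ → PTree → PTree → PTree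
deriving DecidableEq

namespace PTree

/-- Size: the number of internal nodes. -/
def size : PTree → ℕ
  | leaf => 0
  | node _ l r => l.size + r.size + 1

/-- Number of cherries: internal nodes whose two children are leaves. -/
def cherries : PTree → ℕ
  | leaf => 0
  | node _ leaf leaf => 1
  | node _ l r => l.cherries + r.cherries

/-- Multiset of labels of internal nodes. -/
def labels : PTree → Multiset ℕ
  | leaf => 0
  | node k l r => k ::ₘ (l.labels + r.labels)

/-- Labels increase away from the root: each internal node's label is smaller
than all labels in its subtrees. -/
def Incr : PTree → Prop
  | leaf => True
  | node k l r =>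
      (∀ m ∈ l.labels, k < m) ∧ (∀ m ∈ r.labels, k < m) ∧ Incr l ∧ Incr r

/-- A ranked tree of size `n`: labels increase from the root and the internal
labels are exactly `{1, …, n}` (each occurring once). -/
def IsRanked (n : ℕ) (t : PTree) : Prop :=
  t.Incr ∧ t.labels = (Finset.Icc 1 n).val

/-- The Ω-condition: at every internal node, the smaller of the two child
subtrees has at most `ω` internal nodes. -/
def OmegaOK (ω : ℕ) : PTree → Prop
  | leaf => True
  | node _ l r => min l.size r.size ≤ ω ∧ OmegaOK ω l ∧ OmegaOK ω r

/-- One-step flip: swap the two children of some internal node. -/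
inductive Flip : PTree → PTree → Prop
  | swap (k : ℕ) (l r : PTree) : Flip (node k l r) (node k r l)
  | congL {l l' : PTree} (k : ℕ) (r : PTree) : Flip l l' → Flip (node k l r) (node k l' r)
  | congR {r r' : PTree} (k : ℕ) (l : PTree) : Flip r r' → Flip (node k l r) (node k l r')

end PTree

/-- Setoid on trees satisfying `P`, identifying trees up to swapping children
(so that left/right order is immaterial). -/
def treeSetoid (P : PTree → Prop) : Setoid {t : PTree // P t} :=
  Relation.EqvGen.setoid (fun a b => PTree.Flip a.1 b.1)

/-- `|R_n|` : the number of ranked trees (histories) of size `n`. -/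
noncomputable def rankedCount (n : ℕ) : ℕ :=
  Nat.card (Quotient (treeSetoid (PTree.IsRanked n)))

/-- `e_{n,l}` : the number of ranked trees of size `n` with `l` cherries. -/
noncomputable def rankedCountC (n l : ℕ) : ℕ :=
  Nat.card (Quotient (treeSetoid (fun t => PTree.IsRanked n t ∧ t.cherries = l)))

/-- `|Ω^ω_n|` : the number of Ω^ω-trees of size `n`. -/
noncomputable def omegaCount (ω n : ℕ) : ℕ :=
  Nat.card (Quotient (treeSetoid (fun t => PTree.IsRanked n t ∧ PTree.OmegaOK ω t)))

/-- `|Ω^ω_{n,l}|` : the number of Ω^ω-trees of size `n` with `l` cherries. -/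
noncomputable def omegaCountC (ω n l : ℕ) : ℕ :=
  Nat.card (Quotient (treeSetoid
    (fun t => PTree.IsRanked n t ∧ PTree.OmegaOK ω t ∧ t.cherries = l)))

/-!
Work with plane (left/right ordered) ranked trees. Since the labels are distinct, swapping the
children at any of the `n - l` internal nodes that are not cherries gives a different plane tree,
so a ranked tree with `l` cherries has exactly `2 ^ (n - l)` plane representatives and the Yule
model is the uniform distribution on the `n!` plane ranked trees of size `n`.

A plane ranked tree of size `n + 1` arises in exactly one way by grafting the cherry labelled
`n + 1` onto one of the `n + 1` leaves of a plane ranked tree of size `n`. Of these leaves, the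
`2 l` lying in cherries keep the count at `l`, the other `n + 1 - 2 l` raise it to `l + 1`. This
gives linear recursions for the first two moments of the cherry count, whose solutions are
`n! (n + 1) / 3` and, from `n = 4` on, `n! (n + 1) (5 n + 7) / 45`.
-/

namespace Relation.EqvGen

variable {α β : Type*} {r : α → α → Prop}

lemma apply_eq {f : α → β} (hf : ∀ a b, r a b → f a = f b) {a b : α} (h : EqvGen r a b) :
    f a = f b :=
  congrArg (Quot.lift f hf) (Quot.eqvGen_sound h)

lemma map {s : β → β → Prop} (f : α → β) (hf : ∀ a b, r a b → s (f a) (f b))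
    {a b : α} (h : EqvGen r a b) : EqvGen s (f a) (f b) := by
  induction h with
  | rel x y hxy => exact .rel _ _ (hf x y hxy)
  | refl x => exact .refl _
  | symm x y _ ih => exact .symm _ _ ih
  | trans x y z _ _ ih₁ ih₂ => exact .trans _ _ _ ih₁ ih₂

end Relation.EqvGen

lemma Relation.eqvGen_subtype_iff {α : Type*} {r : α → α → Prop} {P : α → Prop}
    (hP : ∀ a b, r a b → (P a ↔ P b)) {a b : Subtype P} :
    Relation.EqvGen (fun a b : Subtype P => r a b) a b ↔ Relation.EqvGen r a b := by
  refine ⟨Relation.EqvGen.map Subtype.val fun _ _ h => h, fun h => ?_⟩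
  suffices ∀ x y, Relation.EqvGen r x y → ∀ (hx : P x) (hy : P y),
      Relation.EqvGen (fun a b : Subtype P => r a b) ⟨x, hx⟩ ⟨y, hy⟩ from this _ _ h a.2 b.2
  intro x y hxy
  induction hxy with
  | rel x y hxy => exact fun _ _ => .rel _ _ hxy
  | refl x => exact fun _ _ => .refl _
  | symm x y _ ih => exact fun hx hy => .symm _ _ (ih hy hx)
  | trans x y z hxy _ ih₁ ih₂ =>
    intro hx hz
    have hy : P y := Relation.EqvGen.apply_eq (fun a b h => propext (hP a b h)) hxy ▸ hx
    exact .trans _ ⟨y, hy⟩ _ (ih₁ hx hy) (ih₂ hy hz)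

lemma Setoid.card_eq_card_quotient_mul {α : Type*} [Finite α] (s : Setoid α) {m : ℕ}
    (h : ∀ a, Nat.card {b // s b a} = m) : Nat.card α = Nat.card (Quotient s) * m := by
  have : Fintype (Quotient s) := Fintype.ofFinite _
  have hfiber : ∀ q : Quotient s, Nat.card {a // Quotient.mk s a = q} = m := by
    refine Quotient.ind fun b => ?_
    rw [← h b]
    exact Nat.card_congr (Equiv.subtypeEquivRight fun a => Quotient.eq)
  rw [← Nat.card_congr (Equiv.sigmaFiberEquiv (Quotient.mk s)), Nat.card_sigma,
    Finset.sum_congr rfl fun q _ => hfiber q, Finset.sum_const, Finset.card_univ,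
    Nat.card_eq_fintype_card, smul_eq_mul]

namespace PTree

lemma card_labels (t : PTree) : Multiset.card t.labels = t.size := by
  induction t with
  | leaf => rfl
  | node k l r ihl ihr => simp [labels, size, ihl, ihr]

lemma eq_leaf_of_labels_eq_zero {t : PTree} (h : t.labels = 0) : t = leaf := by
  cases t with
  | leaf => rfl
  | node k l r => simp [labels] at h

lemma cherries_node {l r : PTree} (h : ¬(l = leaf ∧ r = leaf)) (k : ℕ) :
    (node k l r).cherries = l.cherries + r.cherries := by
  cases l <;> cases r <;> simp_all [cherries]

lemma cherries_le_size (t : PTree) : t.cherries ≤ t.size := by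
  induction t with
  | leaf => rfl
  | node k l r ihl ihr =>
    by_cases hlr : l = leaf ∧ r = leaf
    · obtain ⟨rfl, rfl⟩ := hlr
      rfl
    · rw [cherries_node hlr, size]
      omega

section Flip

variable {s t : PTree}

lemma Flip.ne_leaf (h : Flip s t) : s ≠ leaf ∧ t ≠ leaf := by
  cases h <;> simp

lemma Flip.labels_eq (h : Flip s t) : s.labels = t.labels := by
  induction h with
  | swap k l r => simp only [labels, add_comm]
  | congL k r _ ih => simp only [labels, ih]
  | congR k l _ ih => simp only [labels, ih]

lemma Flip.cherries_eq (h : Flip s t) : s.cherries = t.cherries := by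
  induction h with
  | swap k l r =>
    by_cases hlr : l = leaf ∧ r = leaf
    · rw [hlr.1, hlr.2]
    · rw [cherries_node hlr, cherries_node (by tauto), add_comm]
  | congL k r h ih =>
    rw [cherries_node (by simp [h.ne_leaf.1]), cherries_node (by simp [h.ne_leaf.2]), ih]
  | congR k l h ih =>
    rw [cherries_node (by simp [h.ne_leaf.1]), cherries_node (by simp [h.ne_leaf.2]), ih]

lemma Flip.incr_iff (h : Flip s t) : s.Incr ↔ t.Incr := by
  induction h with
  | swap k l r => simp only [Incr]; tauto
  | congL k r h ih => simp only [Incr, h.labels_eq, ih]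
  | congR k l h ih => simp only [Incr, h.labels_eq, ih]

end Flip

def orbit : PTree → Finset PTree
  | leaf => {leaf}
  | node k l r => ((orbit l ×ˢ orbit r) ∪ (orbit r ×ˢ orbit l)).image fun p => node k p.1 p.2

lemma mem_orbit_self (t : PTree) : t ∈ orbit t := by
  induction t with
  | leaf => simp [orbit]
  | node k l r ihl ihr =>
    simp only [orbit, Finset.mem_image]
    exact ⟨(l, r), by simp [ihl, ihr]⟩

lemma Flip.orbit_eq {s t : PTree} (h : Flip s t) : orbit s = orbit t := by
  induction h with
  | swap k l r => rw [orbit, orbit, Finset.union_comm]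
  | congL k r _ ih => rw [orbit, orbit, ih]
  | congR k l _ ih => rw [orbit, orbit, ih]

lemma eqvGen_node {a a' b b' : PTree} (k : ℕ) (ha : Relation.EqvGen Flip a a')
    (hb : Relation.EqvGen Flip b b') : Relation.EqvGen Flip (node k a b) (node k a' b') :=
  .trans _ _ _ (ha.map (node k · b) fun _ _ h => .congL k b h)
    (hb.map (node k a') fun _ _ h => .congR k a' h)

lemma mem_orbit_iff {s t : PTree} : s ∈ orbit t ↔ Relation.EqvGen Flip s t := by
  refine ⟨fun hs => ?_, fun h => ?_⟩
  · induction t generalizing s with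
    | leaf => rw [Finset.mem_singleton.1 hs]; exact .refl _
    | node k l r ihl ihr =>
      simp only [orbit, Finset.mem_image, Finset.mem_union, Finset.mem_product] at hs
      obtain ⟨⟨a, b⟩, ⟨ha, hb⟩ | ⟨ha, hb⟩, rfl⟩ := hs
      · exact eqvGen_node k (ihl ha) (ihr hb)
      · exact .trans _ _ _ (eqvGen_node k (ihr ha) (ihl hb)) (.rel _ _ (.swap k r l))
  · rw [← Relation.EqvGen.apply_eq (fun _ _ h => Flip.orbit_eq h) h]
    exact mem_orbit_self s

lemma labels_eq_of_mem_orbit {s t : PTree} (h : s ∈ orbit t) : s.labels = t.labels :=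
  Relation.EqvGen.apply_eq (fun _ _ h => Flip.labels_eq h) (mem_orbit_iff.1 h)

lemma disjoint_orbit {l r : PTree} (h : Disjoint l.labels r.labels)
    (hlr : ¬(l = leaf ∧ r = leaf)) : Disjoint (orbit l) (orbit r) := by
  refine Finset.disjoint_left.2 fun s hl hr => hlr ?_
  have hlr' : l.labels = r.labels :=
    (labels_eq_of_mem_orbit hl).symm.trans (labels_eq_of_mem_orbit hr)
  rw [← hlr', disjoint_self] at h
  exact ⟨eq_leaf_of_labels_eq_zero h, eq_leaf_of_labels_eq_zero (hlr' ▸ h)⟩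

lemma card_orbit {t : PTree} (h : t.labels.Nodup) : (orbit t).card = 2 ^ (t.size - t.cherries) := by
  induction t with
  | leaf => rfl
  | node k l r ihl ihr =>
    simp only [labels, Multiset.nodup_cons, Multiset.nodup_add] at h
    obtain ⟨-, hl, hr, hdisj⟩ := h
    by_cases hlr : l = leaf ∧ r = leaf
    · obtain ⟨rfl, rfl⟩ := hlr
      rfl
    have hinj : Function.Injective fun p : PTree × PTree => node k p.1 p.2 :=
      fun p q h => Prod.ext (node.inj h).2.1 (node.inj h).2.2
    have hdisj' : Disjoint (orbit l ×ˢ orbit r) (orbit r ×ˢ orbit l) :=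
      Finset.disjoint_product.2 (Or.inl (disjoint_orbit hdisj hlr))
    rw [orbit, Finset.card_image_of_injective _ hinj, Finset.card_union_of_disjoint hdisj',
      Finset.card_product, Finset.card_product, ihl hl, ihr hr, cherries_node hlr, size]
    have := cherries_le_size l
    have := cherries_le_size r
    rw [show l.size + r.size + 1 - (l.cherries + r.cherries)
      = (l.size - l.cherries) + (r.size - r.cherries) + 1 by omega]
    ring

/-- `ins m t i` grafts a cherry labelled `m` onto the `i`-th leaf of `t`, leaves being
numbered `0, …, t.size` from the left. -/
def ins (m : ℕ) : PTree → ℕ → PTree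
  | leaf, _ => node m leaf leaf
  | node k l r, i =>
      if i < l.size + 1 then node k (ins m l i) r
      else node k l (ins m r (i - (l.size + 1)))

section Ins

variable {m : ℕ}

lemma ins_ne_leaf (t : PTree) (i : ℕ) : ins m t i ≠ leaf := by
  cases t with
  | leaf => simp [ins]
  | node k l r => simp only [ins]; split <;> simp

lemma labels_ins (t : PTree) (i : ℕ) : (ins m t i).labels = m ::ₘ t.labels := by
  induction t generalizing i with
  | leaf => rfl
  | node k l r ihl ihr =>
    simp only [ins]
    split <;> simp only [labels, ihl, ihr, Multiset.cons_add, Multiset.add_cons,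
      Multiset.cons_swap m k]

lemma incr_ins {t : PTree} (ht : t.Incr) (hm : ∀ j ∈ t.labels, j < m) (i : ℕ) :
    (ins m t i).Incr := by
  induction t generalizing i with
  | leaf => simp [ins, Incr, labels]
  | node k l r ihl ihr =>
    obtain ⟨hkl, hkr, hl, hr⟩ := ht
    have hkm : k < m := hm k (Multiset.mem_cons_self k _)
    have hml : ∀ j ∈ l.labels, j < m := fun j hj => hm j (by simp [labels, hj])
    have hmr : ∀ j ∈ r.labels, j < m := fun j hj => hm j (by simp [labels, hj])
    simp only [ins]
    split
    · refine ⟨?_, hkr, ihl hl hml i, hr⟩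
      simpa [labels_ins, hkm] using hkl
    · refine ⟨hkl, ?_, hl, ihr hr hmr _⟩
      simpa [labels_ins, hkm] using hkr

lemma incr_of_incr_ins {t : PTree} {i : ℕ} (h : (ins m t i).Incr) : t.Incr := by
  induction t generalizing i with
  | leaf => trivial
  | node k l r ihl ihr =>
    simp only [ins] at h
    split at h
    · obtain ⟨hkl, hkr, hl, hr⟩ := h
      exact ⟨fun j hj => hkl j (by simp [labels_ins, hj]), hkr, ihl hl, hr⟩
    · obtain ⟨hkl, hkr, hl, hr⟩ := h
      exact ⟨hkl, fun j hj => hkr j (by simp [labels_ins, hj]), hl, ihr hr⟩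

lemma ins_injective {t₁ t₂ : PTree} {i₁ i₂ : ℕ} (hm : m ∉ t₁.labels)
    (hi₁ : i₁ < t₁.size + 1) (hi₂ : i₂ < t₂.size + 1)
    (h : ins m t₁ i₁ = ins m t₂ i₂) :
    t₁ = t₂ ∧ i₁ = i₂ := by
  induction t₁ generalizing t₂ i₁ i₂ with
  | leaf =>
    cases t₂ with
    | leaf => simp only [size] at hi₁ hi₂; exact ⟨rfl, by omega⟩
    | node k l r =>
      simp only [ins] at h
      split at h <;> simp [eq_comm (a := leaf), ins_ne_leaf] at h
  | node k l r ihl ihr =>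
    have hml : m ∉ l.labels := fun hm' => hm (by simp [labels, hm'])
    have hmr : m ∉ r.labels := fun hm' => hm (by simp [labels, hm'])
    cases t₂ with
    | leaf =>
      simp only [ins] at h
      split at h <;> simp [ins_ne_leaf] at h
    | node k' l' r' =>
      simp only [size] at hi₁ hi₂
      simp only [ins] at h
      split at h <;> split at h <;> simp only [node.injEq] at h
      · obtain ⟨rfl, hl, rfl⟩ := h
        obtain ⟨rfl, rfl⟩ := ihl hml (by omega) (by omega) hl
        exact ⟨rfl, rfl⟩
      · exact absurd (h.2.2 ▸ by simp [labels_ins]) hmr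
      · exact absurd (h.2.1 ▸ by simp [labels_ins]) hml
      · obtain ⟨rfl, rfl, hr⟩ := h
        obtain ⟨rfl, hi⟩ := ihr hmr (by omega) (by omega) hr
        exact ⟨rfl, by omega⟩

lemma exists_eq_ins {t : PTree} (ht : t.Incr) (hm : m ∈ t.labels)
    (hle : ∀ j ∈ t.labels, j ≤ m) :
    ∃ t' i, i < t'.size + 1 ∧ t = ins m t' i := by
  induction t with
  | leaf => simp [labels] at hm
  | node k l r ihl ihr =>
    obtain ⟨hkl, hkr, hl, hr⟩ := ht
    have hlel : ∀ j ∈ l.labels, j ≤ m := fun j hj => hle j (by simp [labels, hj])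
    have hler : ∀ j ∈ r.labels, j ≤ m := fun j hj => hle j (by simp [labels, hj])
    simp only [labels, Multiset.mem_cons, Multiset.mem_add] at hm
    rcases hm with rfl | hm | hm
    · have hl0 : l = leaf := eq_leaf_of_labels_eq_zero <| Multiset.eq_zero_of_forall_notMem
        fun j hj => by have := hkl j hj; have := hlel j hj; omega
      have hr0 : r = leaf := eq_leaf_of_labels_eq_zero <| Multiset.eq_zero_of_forall_notMem
        fun j hj => by have := hkr j hj; have := hler j hj; omega
      exact ⟨leaf, 0, by simp [size], by rw [hl0, hr0]; rfl⟩
    · obtain ⟨l', i, hi, rfl⟩ := ihl hl hm hlel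
      exact ⟨node k l' r, i, by simp only [size]; omega, by simp [ins, hi]⟩
    · obtain ⟨r', i, hi, rfl⟩ := ihr hr hm hler
      refine ⟨node k l r', l.size + 1 + i, by simp only [size]; omega, ?_⟩
      rw [ins, if_neg (by omega), Nat.add_sub_cancel_left]

lemma cherries_ins_eq_or (t : PTree) (i : ℕ) :
    (ins m t i).cherries = t.cherries ∨ (ins m t i).cherries = t.cherries + 1 := by
  induction t generalizing i with
  | leaf => simp [ins, cherries]
  | node k l r ihl ihr =>
    by_cases hlr : l = leaf ∧ r = leaf
    · obtain ⟨rfl, rfl⟩ := hlr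
      simp only [ins]
      split <;> simp [cherries]
    · rw [cherries_node hlr, ins]
      split
      · rw [cherries_node (by simp [ins_ne_leaf])]
        have := ihl i
        omega
      · rw [cherries_node (by simp [ins_ne_leaf])]
        have := ihr (i - (l.size + 1))
        omega

lemma sum_cherries_ins (t : PTree) :
    ∑ i ∈ Finset.range (t.size + 1), (ins m t i).cherries + 2 * t.cherries =
      (t.size + 1) * (t.cherries + 1) := by
  induction t with
  | leaf => simp [ins, cherries, size]
  | node k l r ihl ihr =>
    by_cases hlr : l = leaf ∧ r = leaf
    · obtain ⟨rfl, rfl⟩ := hlr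
      simp [ins, cherries, size, Finset.sum_range_succ]
    have hleft : ∀ i ∈ Finset.range (l.size + 1),
        (ins m (node k l r) i).cherries = (ins m l i).cherries + r.cherries := fun i hi => by
      rw [ins, if_pos (Finset.mem_range.1 hi), cherries_node (by simp [ins_ne_leaf])]
    have hright : ∀ i ∈ Finset.range (r.size + 1),
        (ins m (node k l r) (l.size + 1 + i)).cherries = l.cherries + (ins m r i).cherries :=
      fun i _ => by
        rw [ins, if_neg (by omega), Nat.add_sub_cancel_left,
          cherries_node (by simp [ins_ne_leaf])]
    rw [show (node k l r).size + 1 = (l.size + 1) + (r.size + 1) by simp only [size]; ring,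
      Finset.sum_range_add, Finset.sum_congr rfl hleft, Finset.sum_congr rfl hright,
      Finset.sum_add_distrib, Finset.sum_add_distrib, cherries_node hlr]
    simp only [Finset.sum_const, Finset.card_range, smul_eq_mul]
    linarith

lemma sum_comp_cherries_ins {R : Type*} [CommRing R] (f : ℕ → R) (t : PTree) :
    ∑ i ∈ Finset.range (t.size + 1), f (ins m t i).cherries =
      2 * t.cherries * f t.cherries + (t.size + 1 - 2 * t.cherries) * f (t.cherries + 1) := by
  have hterm : ∀ i ∈ Finset.range (t.size + 1), f (ins m t i).cherries =
      f t.cherries + ((ins m t i).cherries - t.cherries) * (f (t.cherries + 1) - f t.cherries) := by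
    intro i _
    rcases cherries_ins_eq_or (m := m) t i with h | h <;>
    · rw [h]
      push_cast
      ring
  have hsum : ∑ i ∈ Finset.range (t.size + 1), ((ins m t i).cherries : R) =
      (t.size + 1) * (t.cherries + 1) - 2 * t.cherries := by
    rw [eq_sub_iff_add_eq]
    simpa using congrArg (Nat.cast : ℕ → R) (sum_cherries_ins (m := m) t)
  rw [Finset.sum_congr rfl hterm, Finset.sum_add_distrib, ← Finset.sum_mul,
    Finset.sum_sub_distrib, hsum]
  simp only [Finset.sum_const, Finset.card_range, nsmul_eq_mul]
  push_cast
  ring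

end Ins

section Ranked

variable {n : ℕ} {t : PTree}

lemma IsRanked.size_eq (h : t.IsRanked n) : t.size = n := by
  rw [← card_labels, h.2, ← Finset.card_def, Nat.card_Icc, Nat.add_sub_cancel]

lemma isRanked_zero_iff : t.IsRanked 0 ↔ t = leaf := by
  refine ⟨fun h => eq_leaf_of_labels_eq_zero (by simpa using h.2), ?_⟩
  rintro rfl
  exact ⟨trivial, rfl⟩

lemma isRanked_succ_iff :
    t.IsRanked (n + 1) ↔ ∃ t', t'.IsRanked n ∧ ∃ i < n + 1, t = ins (n + 1) t' i := by
  have hIcc : (Finset.Icc 1 (n + 1)).val = (n + 1) ::ₘ (Finset.Icc 1 n).val := by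
    rw [← Finset.insert_Icc_right_eq_Icc_add_one (by omega),
      Finset.insert_val_of_notMem (by simp)]
  constructor
  · rintro ⟨hI, hl⟩
    have hmem : ∀ {j}, j ∈ t.labels ↔ 1 ≤ j ∧ j ≤ n + 1 := by simp [hl]
    obtain ⟨t', i, hi, rfl⟩ :=
      exists_eq_ins hI (hmem.2 ⟨by omega, le_rfl⟩) fun j hj => (hmem.1 hj).2
    have ht' : t'.IsRanked n :=
      ⟨incr_of_incr_ins hI, (Multiset.cons_inj_right _).1 (by rw [← labels_ins, hl, hIcc])⟩
    exact ⟨t', ht', i, ht'.size_eq ▸ hi, rfl⟩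
  · rintro ⟨t', ⟨hI, hl⟩, i, -, rfl⟩
    refine ⟨incr_ins hI (fun j hj => ?_) i, by rw [labels_ins, hl, hIcc]⟩
    simp only [hl, Finset.mem_val, Finset.mem_Icc] at hj
    omega

def planeRanked : ℕ → Finset PTree
  | 0 => {leaf}
  | n + 1 => (planeRanked n ×ˢ Finset.range (n + 1)).image fun p => ins (n + 1) p.1 p.2

lemma mem_planeRanked : t ∈ planeRanked n ↔ t.IsRanked n := by
  induction n generalizing t with
  | zero => rw [planeRanked, Finset.mem_singleton, isRanked_zero_iff]
  | succ n ih =>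
    simp only [planeRanked, Finset.mem_image, Finset.mem_product, Finset.mem_range, ih,
      isRanked_succ_iff, Prod.exists]
    grind

lemma injOn_ins_planeRanked (n : ℕ) :
    Set.InjOn (fun p : PTree × ℕ => ins (n + 1) p.1 p.2)
      ↑(planeRanked n ×ˢ Finset.range (n + 1)) := by
  rintro ⟨t₁, i₁⟩ h₁ ⟨t₂, i₂⟩ h₂ h
  simp only [Finset.coe_product, Set.mem_prod, Finset.mem_coe, mem_planeRanked,
    Finset.mem_range] at h₁ h₂
  have hn : n + 1 ∉ t₁.labels := by simp [h₁.1.2]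
  obtain ⟨rfl, rfl⟩ := ins_injective hn (by rw [h₁.1.size_eq]; exact h₁.2)
    (by rw [h₂.1.size_eq]; exact h₂.2) h
  rfl

lemma card_planeRanked (n : ℕ) : (planeRanked n).card = n.factorial := by
  induction n with
  | zero => rfl
  | succ n ih =>
    rw [planeRanked, Finset.card_image_of_injOn (injOn_ins_planeRanked n), Finset.card_product,
      ih, Finset.card_range, Nat.factorial_succ, mul_comm]

lemma sum_planeRanked_succ {M : Type*} [AddCommMonoid M] (g : PTree → M) (n : ℕ) :
    ∑ t ∈ planeRanked (n + 1), g t =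
      ∑ t ∈ planeRanked n, ∑ i ∈ Finset.range (n + 1), g (ins (n + 1) t i) := by
  rw [planeRanked, Finset.sum_image (injOn_ins_planeRanked n), Finset.sum_product]

lemma sum_comp_cherries_planeRanked_succ {R : Type*} [CommRing R] (f : ℕ → R) (n : ℕ) :
    ∑ t ∈ planeRanked (n + 1), f t.cherries = ∑ t ∈ planeRanked n,
      (2 * t.cherries * f t.cherries + (n + 1 - 2 * t.cherries) * f (t.cherries + 1)) := by
  rw [sum_planeRanked_succ]
  refine Finset.sum_congr rfl fun t ht => ?_
  rw [← (mem_planeRanked.1 ht).size_eq, sum_comp_cherries_ins]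

end Ranked

lemma sum_cherries_planeRanked_succ (n : ℕ) :
    ∑ t ∈ planeRanked (n + 1), (t.cherries : ℝ) =
      (n - 1) * ∑ t ∈ planeRanked n, (t.cherries : ℝ) + (n + 1) * n.factorial := by
  have hcard : (n.factorial : ℝ) = ∑ _t ∈ planeRanked n, 1 := by simp [card_planeRanked]
  rw [sum_comp_cherries_planeRanked_succ (fun c => (c : ℝ)), hcard, Finset.mul_sum,
    Finset.mul_sum, ← Finset.sum_add_distrib]
  refine Finset.sum_congr rfl fun t _ => ?_
  push_cast
  ring

lemma sum_cherries_sq_planeRanked_succ (n : ℕ) :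
    ∑ t ∈ planeRanked (n + 1), (t.cherries : ℝ) ^ 2 =
      (n - 3) * ∑ t ∈ planeRanked n, (t.cherries : ℝ) ^ 2 +
        2 * n * ∑ t ∈ planeRanked n, (t.cherries : ℝ) + (n + 1) * n.factorial := by
  have hcard : (n.factorial : ℝ) = ∑ _t ∈ planeRanked n, 1 := by simp [card_planeRanked]
  rw [sum_comp_cherries_planeRanked_succ (fun c => (c : ℝ) ^ 2), hcard, Finset.mul_sum,
    Finset.mul_sum, Finset.mul_sum, ← Finset.sum_add_distrib, ← Finset.sum_add_distrib]
  refine Finset.sum_congr rfl fun t _ => ?_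
  push_cast
  ring

lemma sum_cherries_planeRanked {n : ℕ} (hn : 2 ≤ n) :
    ∑ t ∈ planeRanked n, (t.cherries : ℝ) = n.factorial * (n + 1) / 3 := by
  induction n, hn using Nat.le_induction with
  | base => rw [sum_cherries_planeRanked_succ]; norm_num [Nat.factorial]
  | succ n _ ih =>
    rw [sum_cherries_planeRanked_succ, ih, Nat.factorial_succ]
    push_cast
    ring

lemma sum_cherries_sq_planeRanked {n : ℕ} (hn : 4 ≤ n) :
    ∑ t ∈ planeRanked n, (t.cherries : ℝ) ^ 2 = n.factorial * (n + 1) * (5 * n + 7) / 45 := by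
  induction n, hn using Nat.le_induction with
  | base =>
    rw [sum_cherries_sq_planeRanked_succ, sum_cherries_planeRanked (by norm_num)]
    norm_num [Nat.factorial]
  | succ n hn ih =>
    rw [sum_cherries_sq_planeRanked_succ, ih, sum_cherries_planeRanked (by omega),
      Nat.factorial_succ]
    push_cast
    ring

end PTree

open PTree in
lemma rankedCountC_mul_two_pow (n l : ℕ) :
    rankedCountC n l * 2 ^ (n - l) = ((planeRanked n).filter fun t => t.cherries = l).card := by
  set P : PTree → Prop := fun t => t.IsRanked n ∧ t.cherries = l
  have hP : ∀ a b, Flip a b → (P a ↔ P b) := fun a b h => by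
    simp only [P, IsRanked, h.incr_iff, h.labels_eq, h.cherries_eq]
  have e : {t // P t} ≃ {t // t ∈ (planeRanked n).filter fun t => t.cherries = l} :=
    Equiv.subtypeEquivRight fun t => by simp [P, mem_planeRanked]
  have : Finite {t // P t} := Finite.of_equiv _ e.symm
  rw [← Nat.card_eq_finsetCard, ← Nat.card_congr e, rankedCountC,
    Setoid.card_eq_card_quotient_mul (treeSetoid P)]
  intro b
  have hclass : {a // treeSetoid P a b} ≃ {x // x ∈ orbit b.1} :=
    (Equiv.subtypeEquivRight fun _ =>
        (Relation.eqvGen_subtype_iff hP).trans mem_orbit_iff.symm).trans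
      (Equiv.subtypeSubtypeEquivSubtype fun hx =>
        Relation.EqvGen.apply_eq (fun a b h => propext (hP a b h)) (mem_orbit_iff.1 hx) ▸ b.2)
  rw [Nat.card_congr hclass, Nat.card_eq_finsetCard, card_orbit (b.2.1.2 ▸ Finset.nodup _),
    b.2.1.size_eq, b.2.2]

open PTree in
lemma sum_range_mul_rankedCountC_mul_two_pow {R : Type*} [CommSemiring R] (f : ℕ → R)
    (n : ℕ) :
    ∑ l ∈ Finset.range (n + 1), f l * (rankedCountC n l : R) * 2 ^ (n - l) =
      ∑ t ∈ planeRanked n, f t.cherries := by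
  have hmaps : ∀ t ∈ planeRanked n, t.cherries ∈ Finset.range (n + 1) := fun t ht => by
    have := cherries_le_size t
    rw [(mem_planeRanked.1 ht).size_eq] at this
    exact Finset.mem_range.2 (by omega)
  rw [← Finset.sum_fiberwise_of_maps_to' hmaps]
  refine Finset.sum_congr rfl fun l _ => ?_
  have hcount := congrArg (Nat.cast : ℕ → R) (rankedCountC_mul_two_pow n l)
  push_cast at hcount
  rw [Finset.sum_const, nsmul_eq_mul, mul_assoc, hcount, mul_comm]

/-- under the Yule model the expected number of cherries of a
random ranked tree of size `n ≥ 2` is `(n+1)/3`, and its variance is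
`2(n+1)/45` for `n ≥ 5`. -/
theorem yule_cherries_mean_and_variance :
    (∀ n : ℕ, 2 ≤ n →
      ∑ l ∈ Finset.range (n + 1),
        (l : ℝ) * (rankedCountC n l : ℝ) * 2 ^ (n - l) / (n.factorial : ℝ) =
          ((n : ℝ) + 1) / 3) ∧
    (∀ n : ℕ, 5 ≤ n →
      (∑ l ∈ Finset.range (n + 1),
        (l : ℝ) ^ 2 * (rankedCountC n l : ℝ) * 2 ^ (n - l) / (n.factorial : ℝ)) -
        (((n : ℝ) + 1) / 3) ^ 2 = 2 * ((n : ℝ) + 1) / 45) := by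
  refine ⟨fun n hn => ?_, fun n hn => ?_⟩
  · rw [← Finset.sum_div, sum_range_mul_rankedCountC_mul_two_pow (fun l => (l : ℝ)),
      PTree.sum_cherries_planeRanked hn]
    field_simp
  · rw [← Finset.sum_div, sum_range_mul_rankedCountC_mul_two_pow (fun l => (l : ℝ) ^ 2),
      PTree.sum_cherries_sq_planeRanked (by omega)]
    field_simp
    ring
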